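/- Let n ≥ 1 and let e : Fin n → Fin n → ℝ satisfy e i j > 0 for all i < j. Define, for i < j, the vector ψ_{ij} : Fin n × Fin n → ℂ by ψ_{ij} (k,l) = (1/√2)·((if k = i and l = j then 1 else 0) − (if k = j and l = i then 1 else 0)), and let C^Q_E := ∑_{i<j} e i j • (the rank-one matrix ψ_{ij} ψ_{ij}ᴴ, i.e., with entries ψ_{ij}(k,l)·conj(ψ_{ij}(k',l'))). Then for all ρA, ρB ∈ Ω_n, decoherence of the marginals decreases the cost: T_{C^Q_E}(diag(ρA), diag(ρB)) ≤ T_{C^Q_E}(ρA, ρB), where diag(ρ) denotes the diagonal matrix with the same diagonal as ρ (which is again a density matrix). -/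

import Mathlib

/-!
For a sign vector `s`, conjugation by `S ⊗ S` with `S = diag s` multiplies `ψ⁻_{ij}` by
`s i * s j = ±1`, so it fixes `C^Q_E` and preserves the cost of every coupling. Averaging a
coupling `R` of `(ρA, ρB)` over all `2 ^ n` sign vectors therefore keeps its cost and keeps it a
density matrix, while the entries `(i, j)` of its marginals get multiplied by the average of
`s i * s j`, which is `δ i j`: the average couples the decohered marginals at the same cost.
-/

open Matrix ComplexOrder

/-- A density matrix: positive semidefinite with trace one. -/
def IsDensityMatrix {k : Type*} [Fintype k] [DecidableEq k] (ρ : Matrix k k ℂ) : Prop :=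
  ρ.PosSemidef ∧ ρ.trace = 1

/-- Partial trace over the second factor. -/
noncomputable def trB {m n : ℕ} (R : Matrix (Fin m × Fin n) (Fin m × Fin n) ℂ) :
    Matrix (Fin m) (Fin m) ℂ :=
  Matrix.of fun i j => ∑ p, R (i, p) (j, p)

/-- Partial trace over the first factor. -/
noncomputable def trA {m n : ℕ} (R : Matrix (Fin m × Fin n) (Fin m × Fin n) ℂ) :
    Matrix (Fin n) (Fin n) ℂ :=
  Matrix.of fun p q => ∑ i, R (i, p) (i, q)

/-- The set of quantum couplings of two density matrices. -/
def QCouplings {m n : ℕ} (ρA : Matrix (Fin m) (Fin m) ℂ) (ρB : Matrix (Fin n) (Fin n) ℂ) :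
    Set (Matrix (Fin m × Fin n) (Fin m × Fin n) ℂ) :=
  {R | IsDensityMatrix R ∧ trB R = ρA ∧ trA R = ρB}

/-- The quantum optimal transport cost. -/
noncomputable def QOT {m n : ℕ} (C : Matrix (Fin m × Fin n) (Fin m × Fin n) ℂ)
    (ρA : Matrix (Fin m) (Fin m) ℂ) (ρB : Matrix (Fin n) (Fin n) ℂ) : ℝ :=
  sInf ((fun R => ((C * R).trace).re) '' QCouplings ρA ρB)

/-- The singlet vector `ψ⁻_{ij}` on `Fin n × Fin n`. -/
noncomputable def psiMinus (n : ℕ) (i j : Fin n) : (Fin n × Fin n) → ℂ :=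
  fun kl => ((1 / Real.sqrt 2 : ℝ) : ℂ) *
    ((if kl.1 = i ∧ kl.2 = j then 1 else 0) - (if kl.1 = j ∧ kl.2 = i then 1 else 0))

/-- The cost matrix `C^Q_E = ∑_{i<j} e i j • |ψ⁻_{ij}⟩⟨ψ⁻_{ij}|`. -/
noncomputable def CQE (n : ℕ) (e : Fin n → Fin n → ℝ) :
    Matrix (Fin n × Fin n) (Fin n × Fin n) ℂ :=
  ∑ i : Fin n, ∑ j : Fin n,
    if i < j then e i j • Matrix.vecMulVec (psiMinus n i j) (star (psiMinus n i j))
    else 0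

section SignDiagonal

theorem units_coe_mul_self (u : ℤˣ) : (u : ℂ) * u = 1 := by
  rw [← Int.cast_mul, ← Units.val_mul, Int.units_mul_self, Units.val_one, Int.cast_one]

variable {ι : Type*} [DecidableEq ι]

def signDiag (t : ι → ℤˣ) : Matrix ι ι ℂ := diagonal fun a => (t a : ℂ)

theorem conjTranspose_signDiag (t : ι → ℤˣ) : (signDiag t)ᴴ = signDiag t := by
  rw [signDiag, diagonal_conjTranspose]
  congr
  ext a
  simp

variable [Fintype ι]

theorem sum_sign_mul_sign (i j : ι) :
    ∑ s : ι → ℤˣ, (s i : ℂ) * s j = if i = j then 2 ^ Fintype.card ι else 0 := by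
  split_ifs with hij
  · subst hij
    simp [units_coe_mul_self, Fintype.card_pi, Fintype.card_units_int]
  · -- flipping the sign of `s i` is a bijection that negates every summand
    have hflip := Equiv.sum_comp (Equiv.mulLeft (Pi.mulSingle i (-1) : ι → ℤˣ))
      fun s => (s i : ℂ) * s j
    simp [Ne.symm hij, Finset.sum_neg_distrib] at hflip
    linear_combination -hflip / 2

theorem signDiag_mul_self (t : ι → ℤˣ) : signDiag t * signDiag t = 1 := by
  simp [signDiag, units_coe_mul_self]

theorem signDiag_mul_mul_signDiag_apply (t : ι → ℤˣ) (M : Matrix ι ι ℂ) (a b : ι) :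
    (signDiag t * M * signDiag t) a b = t a * M a b * t b := by
  simp [signDiag, mul_diagonal, diagonal_mul]

theorem trace_signDiag_mul_mul_signDiag (t : ι → ℤˣ) (M : Matrix ι ι ℂ) :
    (signDiag t * M * signDiag t).trace = M.trace := by
  rw [trace_mul_cycle, signDiag_mul_self, one_mul]

theorem Matrix.PosSemidef.signDiag_mul_mul_signDiag {M : Matrix ι ι ℂ} (hM : M.PosSemidef)
    (t : ι → ℤˣ) : (signDiag t * M * signDiag t).PosSemidef := by
  simpa [conjTranspose_signDiag] using hM.conjTranspose_mul_mul_same (signDiag t)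

theorem signDiag_mul_vecMulVec_mul_signDiag {t : ι → ℤˣ} {x : ι → ℂ} {c : ℤˣ}
    (hx : ∀ a, (t a : ℂ) * x a = c * x a) :
    signDiag t * vecMulVec x (star x) * signDiag t = vecMulVec x (star x) := by
  ext a b
  have hb : star (x b) * t b = c * star (x b) := by
    simpa [mul_comm] using congrArg star (hx b)
  rw [signDiag_mul_mul_signDiag_apply, vecMulVec_apply, Pi.star_apply]
  linear_combination (star (x b) * t b) * hx a + (c * x a) * hb +
    (x a * star (x b)) * units_coe_mul_self c

end SignDiagonal

section SignTwirl

variable {ι : Type*} [Fintype ι] [DecidableEq ι]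

/-- `signDiag (fun a => s a.1 * s a.2)` is `S ⊗ₖ S` for `S = signDiag s`. -/
noncomputable def signTwirl (R : Matrix (ι × ι) (ι × ι) ℂ) : Matrix (ι × ι) (ι × ι) ℂ :=
  ((2 : ℂ) ^ Fintype.card ι)⁻¹ •
    ∑ s : ι → ℤˣ, signDiag (fun a => s a.1 * s a.2) * R * signDiag (fun a => s a.1 * s a.2)

theorem map_signTwirl {M : Type*} [AddCommGroup M] [Module ℂ M]
    (L : Matrix (ι × ι) (ι × ι) ℂ →ₗ[ℂ] M) {R : Matrix (ι × ι) (ι × ι) ℂ}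
    (hL : ∀ s : ι → ℤˣ,
      L (signDiag (fun a => s a.1 * s a.2) * R * signDiag (fun a => s a.1 * s a.2)) = L R) :
    L (signTwirl R) = L R := by
  have hcard : ((2 : ℂ) ^ Fintype.card ι) ≠ 0 := pow_ne_zero _ two_ne_zero
  simp only [signTwirl, map_smul, map_sum, hL, Finset.sum_const, Finset.card_univ,
    Fintype.card_pi, Fintype.card_units_int, Finset.prod_const]
  rw [← Nat.cast_smul_eq_nsmul ℂ, smul_smul]
  push_cast
  rw [inv_mul_cancel₀ hcard, one_smul]

theorem Matrix.PosSemidef.signTwirl {R : Matrix (ι × ι) (ι × ι) ℂ} (hR : R.PosSemidef) :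
    (signTwirl R).PosSemidef := by
  refine PosSemidef.smul (posSemidef_sum _ fun _ _ => hR.signDiag_mul_mul_signDiag _) ?_
  exact inv_nonneg.mpr (pow_nonneg zero_le_two _)

theorem trace_signTwirl (R : Matrix (ι × ι) (ι × ι) ℂ) : (signTwirl R).trace = R.trace :=
  map_signTwirl (traceLinearMap _ ℂ ℂ) fun _ => trace_signDiag_mul_mul_signDiag _ R

theorem trace_mul_signTwirl {C : Matrix (ι × ι) (ι × ι) ℂ}
    (hC : ∀ s : ι → ℤˣ,
      signDiag (fun a => s a.1 * s a.2) * C * signDiag (fun a => s a.1 * s a.2) = C)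
    (R : Matrix (ι × ι) (ι × ι) ℂ) : (C * signTwirl R).trace = (C * R).trace := by
  refine map_signTwirl ((traceLinearMap _ ℂ ℂ).comp (LinearMap.mulLeft ℂ C)) fun s => ?_
  simp only [LinearMap.comp_apply, LinearMap.mulLeft_apply, traceLinearMap_apply]
  rw [← Matrix.mul_assoc, trace_mul_comm, ← Matrix.mul_assoc, ← Matrix.mul_assoc, hC s]

theorem signTwirl_apply (R : Matrix (ι × ι) (ι × ι) ℂ) (a b : ι × ι) :
    signTwirl R a b = ((2 : ℂ) ^ Fintype.card ι)⁻¹ *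
      (∑ s : ι → ℤˣ, (s a.1 : ℂ) * s a.2 * s b.1 * s b.2) * R a b := by
  simp only [signTwirl, Matrix.smul_apply, Matrix.sum_apply, signDiag_mul_mul_signDiag_apply,
    smul_eq_mul, Units.val_mul, Int.cast_mul]
  rw [mul_assoc, Finset.sum_mul]
  congr 1
  exact Finset.sum_congr rfl fun s _ => by ring

variable {n : ℕ}

theorem trB_signTwirl (R : Matrix (Fin n × Fin n) (Fin n × Fin n) ℂ) :
    trB (signTwirl R) = diagonal fun i => trB R i i := by
  ext i j
  have hsign : ∀ (s : Fin n → ℤˣ) (p : Fin n),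
      (s i : ℂ) * s p * s j * s p = s i * s j := fun s p => by
    linear_combination (s i : ℂ) * s j * units_coe_mul_self (s p)
  simp only [trB, of_apply, signTwirl_apply, hsign, sum_sign_mul_sign, ← Finset.mul_sum]
  split_ifs with hij
  · subst hij
    simp
  · simp [hij]

theorem trA_signTwirl (R : Matrix (Fin n × Fin n) (Fin n × Fin n) ℂ) :
    trA (signTwirl R) = diagonal fun p => trA R p p := by
  ext p q
  have hsign : ∀ (s : Fin n → ℤˣ) (i : Fin n),
      (s i : ℂ) * s p * s i * s q = s p * s q := fun s i => by
    linear_combination (s p : ℂ) * s q * units_coe_mul_self (s i)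
  simp only [trA, of_apply, signTwirl_apply, hsign, sum_sign_mul_sign, ← Finset.mul_sum]
  split_ifs with hpq
  · subst hpq
    simp
  · simp [hpq]

theorem signTwirl_mem_QCouplings {ρA ρB : Matrix (Fin n) (Fin n) ℂ}
    {R : Matrix (Fin n × Fin n) (Fin n × Fin n) ℂ} (hR : R ∈ QCouplings ρA ρB) :
    signTwirl R ∈ QCouplings (diagonal fun i => ρA i i) (diagonal fun i => ρB i i) := by
  obtain ⟨⟨hpsd, htr⟩, hRA, hRB⟩ := hR
  refine ⟨⟨hpsd.signTwirl, (trace_signTwirl R).trans htr⟩, ?_, ?_⟩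
  · rw [trB_signTwirl, hRA]
  · rw [trA_signTwirl, hRB]

end SignTwirl

theorem psiMinus_sign {n : ℕ} (s : Fin n → ℤˣ) (i j : Fin n) (a : Fin n × Fin n) :
    ((s a.1 * s a.2 : ℤˣ) : ℂ) * psiMinus n i j a = ((s i * s j : ℤˣ) : ℂ) * psiMinus n i j a := by
  obtain ⟨k, l⟩ := a
  by_cases h₁ : k = i ∧ l = j
  · obtain ⟨rfl, rfl⟩ := h₁
    rfl
  by_cases h₂ : k = j ∧ l = i
  · obtain ⟨rfl, rfl⟩ := h₂
    rw [mul_comm (s k)]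
  simp [psiMinus, h₁, h₂]

theorem signDiag_mul_CQE_mul_signDiag {n : ℕ} (e : Fin n → Fin n → ℝ) (s : Fin n → ℤˣ) :
    signDiag (fun a => s a.1 * s a.2) * CQE n e * signDiag (fun a => s a.1 * s a.2) = CQE n e := by
  simp only [CQE, Matrix.mul_sum, Matrix.sum_mul]
  refine Finset.sum_congr rfl fun i _ => Finset.sum_congr rfl fun j _ => ?_
  split_ifs
  · rw [Matrix.mul_smul, Matrix.smul_mul,
      signDiag_mul_vecMulVec_mul_signDiag (psiMinus_sign s i j)]
  · simp

theorem posSemidef_CQE {n : ℕ} {e : Fin n → Fin n → ℝ} (he : ∀ i j : Fin n, i < j → 0 < e i j) :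
    (CQE n e).PosSemidef := by
  refine posSemidef_sum _ fun i _ => posSemidef_sum _ fun j _ => ?_
  split_ifs with hij
  · exact (posSemidef_vecMulVec_self_star _).smul (he i j hij).le
  · exact PosSemidef.zero

open MatrixOrder in
theorem Matrix.PosSemidef.re_trace_mul_nonneg {ι : Type*} [Fintype ι] [DecidableEq ι]
    {A B : Matrix ι ι ℂ} (hA : A.PosSemidef) (hB : B.PosSemidef) : 0 ≤ (A * B).trace.re := by
  obtain ⟨X, rfl⟩ := CStarAlgebra.nonneg_iff_eq_star_mul_self.mp hB.nonneg
  rw [star_eq_conjTranspose, ← Matrix.mul_assoc, trace_mul_comm, ← Matrix.mul_assoc]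
  exact (Complex.nonneg_iff.mp (hA.mul_mul_conjTranspose_same X).trace_nonneg).1

open Kronecker in
theorem QCouplings_nonempty {m n : ℕ} {ρA : Matrix (Fin m) (Fin m) ℂ}
    {ρB : Matrix (Fin n) (Fin n) ℂ} (hA : IsDensityMatrix ρA) (hB : IsDensityMatrix ρB) :
    (QCouplings ρA ρB).Nonempty := by
  refine ⟨ρA ⊗ₖ ρB, ⟨hA.1.kronecker hB.1, by rw [trace_kronecker, hA.2, hB.2, mul_one]⟩, ?_, ?_⟩
  · ext i j
    simp [trB, kroneckerMap_apply, ← Finset.mul_sum, show ∑ p, ρB p p = 1 from hB.2]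
  · ext p q
    simp [trA, kroneckerMap_apply, ← Finset.sum_mul, show ∑ i, ρA i i = 1 from hA.2]

theorem QOT_le_QOT {m n : ℕ} {C : Matrix (Fin m × Fin n) (Fin m × Fin n) ℂ} (hC : C.PosSemidef)
    {ρA σA : Matrix (Fin m) (Fin m) ℂ} {ρB σB : Matrix (Fin n) (Fin n) ℂ}
    (hne : (QCouplings ρA ρB).Nonempty)
    (h : ∀ R ∈ QCouplings ρA ρB, ∃ R' ∈ QCouplings σA σB, (C * R').trace.re ≤ (C * R).trace.re) :
    QOT C σA σB ≤ QOT C ρA ρB := by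
  have hbdd : BddBelow ((fun R => (C * R).trace.re) '' QCouplings σA σB) :=
    ⟨0, by rintro _ ⟨R, hR, rfl⟩; exact hC.re_trace_mul_nonneg hR.1.1⟩
  refine le_csInf (hne.image _) ?_
  rintro _ ⟨R, hR, rfl⟩
  obtain ⟨R', hR', hle⟩ := h R hR
  exact (csInf_le hbdd ⟨R', hR', rfl⟩).trans hle

theorem qot_decoherence_decreases_general (n : ℕ) (e : Fin n → Fin n → ℝ)
    (he : ∀ i j : Fin n, i < j → 0 < e i j)
    (ρA ρB : Matrix (Fin n) (Fin n) ℂ)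
    (hA : IsDensityMatrix ρA) (hB : IsDensityMatrix ρB) :
    QOT (CQE n e) (Matrix.diagonal fun i => ρA i i) (Matrix.diagonal fun i => ρB i i) ≤
      QOT (CQE n e) ρA ρB := by
  refine QOT_le_QOT (posSemidef_CQE he) (QCouplings_nonempty hA hB) fun R hR => ?_
  refine ⟨signTwirl R, signTwirl_mem_QCouplings hR, ?_⟩
  rw [trace_mul_signTwirl (signDiag_mul_CQE_mul_signDiag e)]

/-- decoherence of the marginals decreases the `C^Q_E` transport cost. -/
theorem qot_decoherence_decreases (n : ℕ) (hn : 1 ≤ n) (e : Fin n → Fin n → ℝ)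
    (he : ∀ i j : Fin n, i < j → 0 < e i j)
    (ρA ρB : Matrix (Fin n) (Fin n) ℂ)
    (hA : IsDensityMatrix ρA) (hB : IsDensityMatrix ρB) :
    QOT (CQE n e) (Matrix.diagonal fun i => ρA i i) (Matrix.diagonal fun i => ρB i i) ≤
      QOT (CQE n e) ρA ρB :=
  qot_decoherence_decreases_general n e he ρA ρB hA hB
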